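/- arXiv:2403.18464 — 2 statements merged into one kernel-verified Lean document; each statement's English description precedes it below -/
import Mathlib

section
/- Under the quasi-independence assumption — namely that for c_L ≤ r ≤ t2 and c_L ≤ r ≤ c one has Pr(R ≤ r, T2 > t2, C > c | T2 ≥ R, C ≥ R) = a^{-1} F_R(r) S_2(t2 | c_L) S_C(c), where a = ∫∫∫_{r ≤ t2 ∧ c} dF_R(r) dS_2(t2|c_L) dS_C(c) — the function K(v) = S_2(v⁻ | c_L) / Pr(R ≤ v, T2 ≥ v, C ≥ v | T2 ≥ R) satisfies K(v) = a / (F_R(v) S_C(v⁻)) for v in the support. -/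
open MeasureTheory ProbabilityTheory
open scoped ENNReal

/-- under the quasi-independence assumption the inverse-probability
weight satisfies `K(v) = a / (F_R(v) S_C(v⁻))`.  Here `S_C(v⁻) = Pr(C ≥ v)` and
`S_2(v⁻ | c_L) = Pr(T2 ≥ v | T2 > c_L)` are the left limits of the (continuous)
survival functions. -/
theorem quasi_independence_weight
    {Ω : Type*} [MeasurableSpace Ω] (P : Measure Ω) [IsProbabilityMeasure P]
    (R T2 C : Ω → ℝ) (hR : Measurable R) (hT2 : Measurable T2) (hC : Measurable C)
    (cL : ℝ) (hcL : 0 < cL)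
    (a : ℝ≥0∞) (ha0 : a ≠ 0) (hatop : a ≠ ⊤)
    -- absolute continuity of R, T2, C (no atoms)
    (hRcont : ∀ t : ℝ, P {ω | R ω = t} = 0)
    (hT2cont : ∀ t : ℝ, P {ω | T2 ω = t} = 0)
    (hCcont : ∀ t : ℝ, P {ω | C ω = t} = 0)
    -- the quasi-independence factorization
    (hquasi : ∀ r t2 c : ℝ, cL ≤ r → r ≤ t2 → r ≤ c →
      ProbabilityTheory.cond P {ω | R ω ≤ T2 ω ∧ R ω ≤ C ω}
          {ω | R ω ≤ r ∧ t2 < T2 ω ∧ c < C ω}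
        = a⁻¹ * P {ω | R ω ≤ r}
            * ProbabilityTheory.cond P {ω | cL < T2 ω} {ω | t2 < T2 ω}
            * P {ω | c < C ω})
    (v : ℝ) (hv : cL ≤ v)
    -- `v` is in the support
    (hFR : P {ω | R ω ≤ v} ≠ 0)
    (hSC : P {ω | v ≤ C ω} ≠ 0)
    (hS2 : ProbabilityTheory.cond P {ω | cL < T2 ω} {ω | v ≤ T2 ω} ≠ 0) :
    ProbabilityTheory.cond P {ω | cL < T2 ω} {ω | v ≤ T2 ω}
        / ProbabilityTheory.cond P {ω | R ω ≤ T2 ω ∧ R ω ≤ C ω}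
            {ω | R ω ≤ v ∧ v ≤ T2 ω ∧ v ≤ C ω}
      = a / (P {ω | R ω ≤ v} * P {ω | v ≤ C ω}) := by
  classical
  set A : Set Ω := {ω | R ω ≤ T2 ω ∧ R ω ≤ C ω} with hAdef
  set B : Set Ω := {ω | cL < T2 ω} with hBdef
  have hAmeas : MeasurableSet A :=
    (measurableSet_le hR hT2).inter (measurableSet_le hR hC)
  have hBmeas : MeasurableSet B := measurableSet_lt measurable_const hT2
  -- null sets
  have hTv : P {ω | T2 ω = v} = 0 := hT2cont v
  have hCv : P {ω | C ω = v} = 0 := hCcont v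
  -- replace ≤ by < using continuity
  have keyC : P {ω | v < C ω} = P {ω | v ≤ C ω} := by
    refine le_antisymm (measure_mono fun ω h => show v ≤ C ω from le_of_lt h) ?_
    calc P {ω | v ≤ C ω} ≤ P ({ω | v < C ω} ∪ {ω | C ω = v}) := by
          refine measure_mono fun ω h => ?_
          rcases lt_or_eq_of_le (show v ≤ C ω from h) with h' | h'
          · exact Or.inl h'
          · exact Or.inr h'.symm
      _ ≤ P {ω | v < C ω} + P {ω | C ω = v} := measure_union_le _ _
      _ = P {ω | v < C ω} := by rw [hCv, add_zero]
  have keyS2 : P (B ∩ {ω | v < T2 ω}) = P (B ∩ {ω | v ≤ T2 ω}) := by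
    refine le_antisymm (measure_mono (Set.inter_subset_inter_right _ fun ω h => show v ≤ T2 ω from le_of_lt h)) ?_
    calc P (B ∩ {ω | v ≤ T2 ω})
        ≤ P ((B ∩ {ω | v < T2 ω}) ∪ {ω | T2 ω = v}) := by
          refine measure_mono fun ω h => ?_
          rcases lt_or_eq_of_le (show v ≤ T2 ω from h.2) with h' | h'
          · exact Or.inl ⟨h.1, h'⟩
          · exact Or.inr h'.symm
      _ ≤ P (B ∩ {ω | v < T2 ω}) + P {ω | T2 ω = v} := measure_union_le _ _
      _ = P (B ∩ {ω | v < T2 ω}) := by rw [hTv, add_zero]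
  have keyA : P (A ∩ {ω | R ω ≤ v ∧ v < T2 ω ∧ v < C ω})
      = P (A ∩ {ω | R ω ≤ v ∧ v ≤ T2 ω ∧ v ≤ C ω}) := by
    refine le_antisymm (measure_mono (Set.inter_subset_inter_right _
      fun ω h => ⟨h.1, le_of_lt h.2.1, le_of_lt h.2.2⟩)) ?_
    calc P (A ∩ {ω | R ω ≤ v ∧ v ≤ T2 ω ∧ v ≤ C ω})
        ≤ P ((A ∩ {ω | R ω ≤ v ∧ v < T2 ω ∧ v < C ω}) ∪
            ({ω | T2 ω = v} ∪ {ω | C ω = v})) := by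
          refine measure_mono fun ω h => ?_
          rcases lt_or_eq_of_le (show v ≤ T2 ω from h.2.2.1) with h1 | h1
          · rcases lt_or_eq_of_le (show v ≤ C ω from h.2.2.2) with h2 | h2
            · exact Or.inl ⟨h.1, h.2.1, h1, h2⟩
            · exact Or.inr (Or.inr h2.symm)
          · exact Or.inr (Or.inl h1.symm)
      _ ≤ P (A ∩ {ω | R ω ≤ v ∧ v < T2 ω ∧ v < C ω}) +
            P ({ω | T2 ω = v} ∪ {ω | C ω = v}) := measure_union_le _ _
      _ = P (A ∩ {ω | R ω ≤ v ∧ v < T2 ω ∧ v < C ω}) := by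
          rw [measure_union_null hTv hCv, add_zero]
  -- translate cond equalities
  have hS2eq : ProbabilityTheory.cond P B {ω | v < T2 ω}
      = ProbabilityTheory.cond P B {ω | v ≤ T2 ω} := by
    rw [ProbabilityTheory.cond_apply hBmeas, ProbabilityTheory.cond_apply hBmeas, keyS2]
  have hAeq : ProbabilityTheory.cond P A {ω | R ω ≤ v ∧ v < T2 ω ∧ v < C ω}
      = ProbabilityTheory.cond P A {ω | R ω ≤ v ∧ v ≤ T2 ω ∧ v ≤ C ω} := by
    rw [ProbabilityTheory.cond_apply hAmeas, ProbabilityTheory.cond_apply hAmeas, keyA]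
  have hmain : ProbabilityTheory.cond P A {ω | R ω ≤ v ∧ v ≤ T2 ω ∧ v ≤ C ω}
      = a⁻¹ * P {ω | R ω ≤ v} * ProbabilityTheory.cond P B {ω | v ≤ T2 ω}
        * P {ω | v ≤ C ω} := by
    rw [← hAeq, hquasi v v v hv le_rfl le_rfl, hS2eq, keyC]
  set x := ProbabilityTheory.cond P B {ω | v ≤ T2 ω} with hxdef
  set F := P {ω | R ω ≤ v} with hFdef
  set SC := P {ω | v ≤ C ω} with hSCdef
  rw [hmain]
  -- finiteness facts
  have hFtop : F ≠ ⊤ := (measure_lt_top P _).ne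
  have hSCtop : SC ≠ ⊤ := (measure_lt_top P _).ne
  have hPB : P B ≠ 0 := by
    intro h
    apply hS2
    rw [hxdef, ProbabilityTheory.cond_apply hBmeas, h, ENNReal.inv_zero]
    have : P (B ∩ {ω | v ≤ T2 ω}) = 0 :=
      le_antisymm (h ▸ measure_mono Set.inter_subset_left) zero_le
    rw [this, mul_zero]
  have hxtop : x ≠ ⊤ := by
    rw [hxdef, ProbabilityTheory.cond_apply hBmeas]
    exact ENNReal.mul_ne_top (ENNReal.inv_ne_top.mpr hPB) (measure_lt_top P _).ne
  -- algebra
  have hrw : a⁻¹ * F * x * SC = x * (a⁻¹ * (F * SC)) := by ring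
  rw [hrw]
  rw [show x / (x * (a⁻¹ * (F * SC))) = x * 1 / (x * (a⁻¹ * (F * SC))) by rw [mul_one]]
  rw [ENNReal.mul_div_mul_left _ _ hS2 hxtop, one_div]
  rw [ENNReal.mul_inv (Or.inl (ENNReal.inv_ne_zero.mpr hatop))
      (Or.inl (ENNReal.inv_ne_top.mpr ha0)), inv_inv, div_eq_mul_inv]
end

section
/- Suppose the death ages among observations with δ_{2i} = 1 are all distinct (no ties). Then the Nelson–Aalen-type conditional hazard increment Λ̂_{1|2}(dt1 | t2) = [Σ_i δ_{2i} 1{V_{2i} = t2} dN_{1i}(t1)] / [Σ_i δ_{2i} 1{V_{2i} = t2} Y_i(t1, t2)] evaluated at t2 = T_{2i} equals δ_{1i} δ_{2i} 1{V_{1i} = t1}, the product-integral estimator satisfies 1 − Ŝ_{1|2}(t1 | T_{2i}) = δ_{1i} δ_{2i} 1{V_{1i} ≤ t1}, and consequently the plug-in estimator G̃_1(t1) = Σ_j {1 − Ŝ_{1|2}(t1 ∧ t_{2,j} | t_{2,j})} ΔF̂_2(t_{2,j}) reduces to Ĝ_1(t1) = (1/n) Σ_i δ_{1i} δ_{2i}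 1{V_{1i} ≤ t1} Ŝ_2(T_{2i}⁻)/Ȳ_2(T_{2i}), where Ȳ_2(t) = n^{-1} Σ_i 1{R_i ≤ t ≤ V_{2i}} and F̂_2 = 1 − Ŝ_2 is the left-truncation-adjusted Kaplan–Meier estimator of death. -/
open scoped Classical BigOperators

/-- with no tied death ages, the conditional Nelson–Aalen increment
reduces to an indicator, the product-limit estimator `Ŝ_{1|2}` reduces to an
indicator, and the plug-in CIF estimator `G̃₁` reduces to the IPW form `Ĝ₁`. -/
theorem no_ties_reduction
    (n : ℕ) (hn : 0 < n)
    (V1 V2 R : Fin n → ℝ) (δ1 δ2 : Fin n → Bool)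
    -- observed-data structure: enrollment while alive, onset before death
    (hRV2 : ∀ i, R i ≤ V2 i)
    (hV12 : ∀ i, V1 i ≤ V2 i)
    -- no tied death ages
    (hties : ∀ i j, δ2 i = true → δ2 j = true → V2 i = V2 j → i = j)
    -- the Nelson–Aalen-type conditional hazard increment Λ̂_{1|2}(dt1|t2)
    (inc : ℝ → ℝ → ℝ)
    (hinc : ∀ t1 t2 : ℝ, inc t1 t2 =
      (∑ j, (if δ2 j = true ∧ V2 j = t2 ∧ δ1 j = true ∧ V1 j = t1 then (1:ℝ) else 0))
        / (∑ j, (if δ2 j = true ∧ V2 j = t2 ∧ t1 ≤ V1 j ∧ R j ≤ t2 then (1:ℝ) else 0)))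
    -- the product-integral estimator Ŝ_{1|2}(t1|t2) = Π_{s ≤ t1} (1 - Λ̂_{1|2}(ds|t2))
    (Shat : ℝ → ℝ → ℝ)
    (hShat : ∀ t1 t2 : ℝ, Shat t1 t2 =
      ∏ s ∈ (Finset.univ.image V1).filter (fun s => s ≤ t1), (1 - inc s t2))
    -- the left-truncation-adjusted Kaplan–Meier estimator of death and its jumps
    (S2hat Ybar2 ΔF2 : ℝ → ℝ)
    (hYbar : ∀ t : ℝ, Ybar2 t
      = (n:ℝ)⁻¹ * ∑ i, (if R i ≤ t ∧ t ≤ V2 i then (1:ℝ) else 0))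
    (hKM : ∀ i, δ2 i = true → ΔF2 (V2 i) = (n:ℝ)⁻¹ * S2hat (V2 i) / Ybar2 (V2 i))
    (t1 : ℝ) :
    (∀ i, δ2 i = true →
        inc t1 (V2 i) = (if δ1 i = true ∧ V1 i = t1 then (1:ℝ) else 0)
      ∧ 1 - Shat t1 (V2 i) = (if δ1 i = true ∧ V1 i ≤ t1 then (1:ℝ) else 0))
    ∧ (∑ i ∈ Finset.univ.filter (fun i => δ2 i = true),
          (1 - Shat (min t1 (V2 i)) (V2 i)) * ΔF2 (V2 i))
        = (n:ℝ)⁻¹ * ∑ i, (if δ1 i = true ∧ δ2 i = true ∧ V1 i ≤ t1 then (1:ℝ) else 0)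
            * S2hat (V2 i) / Ybar2 (V2 i) := by
  have key : ∀ i, δ2 i = true → ∀ t : ℝ,
      inc t (V2 i) = (if δ1 i = true ∧ V1 i = t then (1:ℝ) else 0) := by
    intro i hi t
    rw [hinc]
    have hnum : (∑ j, (if δ2 j = true ∧ V2 j = V2 i ∧ δ1 j = true ∧ V1 j = t
        then (1:ℝ) else 0))
        = (if δ1 i = true ∧ V1 i = t then (1:ℝ) else 0) := by
      rw [Finset.sum_eq_single i]
      · simp [hi]
      · intro j _ hji
        rw [if_neg]
        rintro ⟨h1, h2, -, -⟩
        exact hji (hties j i h1 hi h2)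
      · simp
    have hden : (∑ j, (if δ2 j = true ∧ V2 j = V2 i ∧ t ≤ V1 j ∧ R j ≤ V2 i
        then (1:ℝ) else 0))
        = (if t ≤ V1 i then (1:ℝ) else 0) := by
      rw [Finset.sum_eq_single i]
      · simp [hi, hRV2 i]
      · intro j _ hji
        rw [if_neg]
        rintro ⟨h1, h2, -, -⟩
        exact hji (hties j i h1 hi h2)
      · simp
    rw [hnum, hden]
    by_cases h : δ1 i = true ∧ V1 i = t
    · rw [if_pos h, if_pos (le_of_eq h.2.symm)]; norm_num
    · rw [if_neg h, zero_div]
  have keyS : ∀ i, δ2 i = true → ∀ t : ℝ,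
      1 - Shat t (V2 i) = (if δ1 i = true ∧ V1 i ≤ t then (1:ℝ) else 0) := by
    intro i hi t
    rw [hShat]
    by_cases h : δ1 i = true ∧ V1 i ≤ t
    · rw [if_pos h, Finset.prod_eq_zero (i := V1 i)]
      · ring
      · simp [h.2]
      · rw [key i hi, if_pos ⟨h.1, rfl⟩]; ring
    · rw [if_neg h, Finset.prod_eq_one]
      · ring
      · intro s hs
        rw [key i hi, if_neg, sub_zero]
        rintro ⟨h1, h2⟩
        exact h ⟨h1, by simp only [Finset.mem_filter] at hs; rw [h2]; exact hs.2⟩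
  refine ⟨fun i hi => ⟨key i hi t1, keyS i hi t1⟩, ?_⟩
  rw [Finset.mul_sum, Finset.sum_filter]
  apply Finset.sum_congr rfl
  intro i _
  by_cases hi : δ2 i = true
  · rw [if_pos hi, keyS i hi, hKM i hi]
    have hmin : (V1 i ≤ min t1 (V2 i)) ↔ V1 i ≤ t1 := by
      simp [le_min_iff, hV12 i]
    by_cases h1 : δ1 i = true ∧ V1 i ≤ t1
    · rw [if_pos ⟨h1.1, hmin.mpr h1.2⟩, if_pos ⟨h1.1, hi, h1.2⟩]
      ring
    · rw [if_neg (fun hc => h1 ⟨hc.1, hmin.mp hc.2⟩),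
        if_neg (fun hc => h1 ⟨hc.1, hc.2.2⟩)]
      ring
  · rw [if_neg hi, if_neg (fun hc => hi hc.2.1)]
    ring
end
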